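/- arXiv:2308.13843 — 2 statements merged into one kernel-verified Lean document; each statement's English description precedes it below -/
import Mathlib

section
/- Suppose a commutative diagram in pro-HPol is given, consisting of pro-morphisms f : X → Y, f' : X' → Y', α : X → X', β : Y → Y' with β ∘ f = f' ∘ α, where α and β are isomorphisms of pro-HPol. If dim f ≤ n, then dim f' ≤ n. -/
universe u

noncomputable section

namespace ShapePaper

open CategoryTheory

/-! ### H-maps: morphisms of the homotopy category HTop -/

/-- The setoid of continuous maps up to homotopy. -/
def homotopySetoid (X Y : Type u) [TopologicalSpace X] [TopologicalSpace Y] :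
    Setoid C(X, Y) :=
  ⟨ContinuousMap.Homotopic, ContinuousMap.Homotopic.equivalence⟩

/-- An H-map `X → Y` is a homotopy class of continuous maps `X → Y`,
i.e. a morphism of the homotopy category `HTop`. -/
def HMap (X Y : Type u) [TopologicalSpace X] [TopologicalSpace Y] : Type u :=
  Quotient (homotopySetoid X Y)

variable {X Y Z W : Type u} [TopologicalSpace X] [TopologicalSpace Y]
  [TopologicalSpace Z] [TopologicalSpace W]

/-- The H-map (homotopy class) of a continuous map. -/
def HMap.mk (f : C(X, Y)) : HMap X Y := Quotient.mk (homotopySetoid X Y) f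

/-- The identity H-map. -/
protected def HMap.id (X : Type u) [TopologicalSpace X] : HMap X X :=
  HMap.mk (ContinuousMap.id X)

/-- Composition of H-maps. -/
protected def HMap.comp (g : HMap Y Z) (f : HMap X Y) : HMap X Z :=
  Quotient.liftOn₂ g f (fun g f => HMap.mk (g.comp f))
    (fun _ _ _ _ hg hf => Quotient.sound (ContinuousMap.Homotopic.comp hg hf))

theorem HMap.comp_assoc (h : HMap Z W) (g : HMap Y Z) (f : HMap X Y) :
    HMap.comp (HMap.comp h g) f = HMap.comp h (HMap.comp g f) := by
  induction h using Quotient.inductionOn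
  induction g using Quotient.inductionOn
  induction f using Quotient.inductionOn
  rfl

theorem HMap.id_comp (f : HMap X Y) : HMap.comp (HMap.id Y) f = f := by
  induction f using Quotient.inductionOn
  rfl

theorem HMap.comp_id (f : HMap X Y) : HMap.comp f (HMap.id X) = f := by
  induction f using Quotient.inductionOn
  rfl

/-! ### Polyhedra and the category HPol -/

/-- A realization of the space `P` as (the space of) a simplicial complex. -/
structure PolyhedralRealization (P : Type u) [TopologicalSpace P] where
  /-- the ambient topological real vector space -/
  E : Type u
  [addCommGroup : AddCommGroup E]
  [module : Module ℝ E]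
  [topE : TopologicalSpace E]
  /-- the simplicial complex -/
  complex : Geometry.SimplicialComplex ℝ E
  /-- `P` is homeomorphic to the space (carrier) of the complex -/
  homeo : P ≃ₜ complex.space

attribute [instance] PolyhedralRealization.addCommGroup PolyhedralRealization.module
  PolyhedralRealization.topE

/-- The realization has dimension `≤ n`: every simplex has at most `n + 1` vertices. -/
def PolyhedralRealization.DimLE {P : Type u} [TopologicalSpace P]
    (R : PolyhedralRealization P) (n : ℕ) : Prop :=
  ∀ s ∈ R.complex.faces, s.card ≤ n + 1

/-- `P` is a polyhedron. -/
def IsPolyhedron (P : Type u) [TopologicalSpace P] : Prop :=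
  Nonempty (PolyhedralRealization P)

/-- `P` is a polyhedron of dimension `≤ n`. -/
def IsPolyhedronDimLE (P : Type u) [TopologicalSpace P] (n : ℕ) : Prop :=
  ∃ R : PolyhedralRealization P, R.DimLE n

/-- `X` is an object of `HPol`, i.e. has the homotopy type of a polyhedron. -/
def InHPol (X : Type u) [TopologicalSpace X] : Prop :=
  ∃ (P : Type u) (_ : TopologicalSpace P), IsPolyhedron P ∧
    Nonempty (ContinuousMap.HomotopyEquiv X P)

/-- The H-map `f` factors in `HPol` through some polyhedron of dimension `≤ n`. -/
def HMap.FactorsThruPolyhedronDimLE (f : HMap X Y) (n : ℕ) : Prop :=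
  ∃ (P : Type u) (_ : TopologicalSpace P), IsPolyhedronDimLE P n ∧
    ∃ (u : HMap X P) (v : HMap P Y), f = v.comp u

/-- `X` is homotopy dominated by a polyhedron of dimension `≤ n`. -/
def DominatedByPolyhedronDimLE (X : Type u) [TopologicalSpace X] (n : ℕ) : Prop :=
  ∃ (P : Type u) (_ : TopologicalSpace P), IsPolyhedronDimLE P n ∧
    ∃ (s : HMap X P) (d : HMap P X), d.comp s = HMap.id X

/-! ### Inverse systems in HPol -/

/-- An inverse system in the category `HPol`: a directed index set `Idx`, spaces `obj i`
having the homotopy type of polyhedra, and bonding H-maps. -/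
structure InverseSystem : Type (u + 1) where
  /-- the index set -/
  Idx : Type u
  [preorder : Preorder Idx]
  [idxNonempty : Nonempty Idx]
  directed : ∀ a b : Idx, ∃ c, a ≤ c ∧ b ≤ c
  /-- the terms of the system -/
  obj : Idx → Type u
  [topObj : ∀ i, TopologicalSpace (obj i)]
  inHPol : ∀ i, InHPol (obj i)
  /-- the bonding H-maps -/
  bond : ∀ {i j : Idx}, i ≤ j → HMap (obj j) (obj i)
  bond_refl : ∀ i : Idx, bond (le_refl i) = HMap.id (obj i)
  bond_trans : ∀ {i j k : Idx} (hij : i ≤ j) (hjk : j ≤ k),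
    HMap.comp (bond hij) (bond hjk) = bond (hij.trans hjk)

attribute [instance] InverseSystem.preorder InverseSystem.idxNonempty InverseSystem.topObj

/-- A morphism of inverse systems in `HPol`. -/
structure SysMor (𝓧 𝓨 : InverseSystem.{u}) : Type u where
  /-- the index function `φ` -/
  idxMap : 𝓨.Idx → 𝓧.Idx
  /-- the H-maps `f_μ : X_{φ(μ)} → Y_μ` -/
  hmap : ∀ μ : 𝓨.Idx, HMap (𝓧.obj (idxMap μ)) (𝓨.obj μ)
  coherent : ∀ {μ μ' : 𝓨.Idx} (h : μ ≤ μ'),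
    ∃ (l : 𝓧.Idx) (h₁ : idxMap μ ≤ l) (h₂ : idxMap μ' ≤ l),
      (𝓨.bond h).comp ((hmap μ').comp (𝓧.bond h₂)) = (hmap μ).comp (𝓧.bond h₁)

variable {𝓧 𝓨 𝓩 : InverseSystem.{u}}

/-- `f_{μλ} := f_μ ∘ p_{φ(μ)λ}` for `λ ≥ φ(μ)`. -/
def SysMor.shift (F : SysMor 𝓧 𝓨) (μ : 𝓨.Idx) {l : 𝓧.Idx} (h : F.idxMap μ ≤ l) :
    HMap (𝓧.obj l) (𝓨.obj μ) :=
  (F.hmap μ).comp (𝓧.bond h)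

theorem SysMor.shift_comp (F : SysMor 𝓧 𝓨) (μ : 𝓨.Idx) {l l' : 𝓧.Idx}
    (h : F.idxMap μ ≤ l) (h' : l ≤ l') :
    (F.shift μ h).comp (𝓧.bond h') = F.shift μ (h.trans h') := by
  rw [SysMor.shift, SysMor.shift, HMap.comp_assoc, 𝓧.bond_trans]

/-- Coherence, pushed up to all larger indices. -/
theorem SysMor.coherent' (F : SysMor 𝓧 𝓨) {μ μ' : 𝓨.Idx} (h : μ ≤ μ') :
    ∃ (l : 𝓧.Idx) (h₁ : F.idxMap μ ≤ l) (h₂ : F.idxMap μ' ≤ l),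
      ∀ {l' : 𝓧.Idx} (hl : l ≤ l'),
        (𝓨.bond h).comp ((F.hmap μ').comp (𝓧.bond (h₂.trans hl))) =
          (F.hmap μ).comp (𝓧.bond (h₁.trans hl)) := by
  obtain ⟨l, h₁, h₂, heq⟩ := F.coherent h
  refine ⟨l, h₁, h₂, ?_⟩
  intro l' hl
  have := congrArg (fun t => HMap.comp t (𝓧.bond hl)) heq
  simpa only [HMap.comp_assoc, InverseSystem.bond_trans] using this

/-- The dimension of a morphism of inverse systems is `≤ n`. -/
def SysMor.DimLE (F : SysMor 𝓧 𝓨) (n : ℕ) : Prop :=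
  ∀ μ : 𝓨.Idx, ∃ (l : 𝓧.Idx) (h : F.idxMap μ ≤ l),
    (F.shift μ h).FactorsThruPolyhedronDimLE n

/-- The dimension of an inverse system is `≤ n` : every term is homotopy dominated by
a polyhedron of dimension `≤ n`. -/
def InverseSystem.DimLE (𝓧 : InverseSystem.{u}) (n : ℕ) : Prop :=
  ∀ i : 𝓧.Idx, DominatedByPolyhedronDimLE (𝓧.obj i) n

/-- Equivalence of morphisms of inverse systems. -/
def SysMor.Equiv (F G : SysMor 𝓧 𝓨) : Prop :=
  ∀ μ : 𝓨.Idx, ∃ (l : 𝓧.Idx) (h₁ : F.idxMap μ ≤ l) (h₂ : G.idxMap μ ≤ l),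
    F.shift μ h₁ = G.shift μ h₂

/-- A pro-morphism (morphism of pro-HPol) is an equivalence class of morphisms
of inverse systems. -/
def ProMor (𝓧 𝓨 : InverseSystem.{u}) : Type u :=
  Quot (@SysMor.Equiv 𝓧 𝓨)

/-- The pro-morphism represented by a morphism of inverse systems. -/
def ProMor.mk (F : SysMor 𝓧 𝓨) : ProMor 𝓧 𝓨 := Quot.mk _ F

/-- The dimension of a pro-morphism is `≤ n` if it admits a representative of
dimension `≤ n`. -/
def ProMor.DimLE (f : ProMor 𝓧 𝓨) (n : ℕ) : Prop :=
  ∃ F : SysMor 𝓧 𝓨, ProMor.mk F = f ∧ F.DimLE n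

/-- The identity morphism of an inverse system. -/
def SysMor.identity (𝓧 : InverseSystem.{u}) : SysMor 𝓧 𝓧 where
  idxMap := id
  hmap i := HMap.id (𝓧.obj i)
  coherent := by
    intro μ μ' h
    refine ⟨μ', h, le_refl _, ?_⟩
    show (𝓧.bond h).comp ((HMap.id _).comp (𝓧.bond (le_refl μ'))) =
      (HMap.id _).comp (𝓧.bond h)
    rw [HMap.id_comp, HMap.id_comp, 𝓧.bond_trans]

/-- Composition of morphisms of inverse systems. -/
def SysMor.comp (G : SysMor 𝓨 𝓩) (F : SysMor 𝓧 𝓨) : SysMor 𝓧 𝓩 where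
  idxMap := F.idxMap ∘ G.idxMap
  hmap ν := (G.hmap ν).comp (F.hmap (G.idxMap ν))
  coherent := by
    intro ν ν' h
    obtain ⟨μ, hμ₁, hμ₂, hg⟩ := G.coherent h
    obtain ⟨l₁, h₁₁, h₁₂, hf₁⟩ := F.coherent' hμ₁
    obtain ⟨l₂, h₂₁, h₂₂, hf₂⟩ := F.coherent' hμ₂
    obtain ⟨l, hl₁, hl₂⟩ := 𝓧.directed l₁ l₂
    refine ⟨l, h₁₁.trans hl₁, h₂₁.trans hl₂, ?_⟩
    have e₁ := hf₁ hl₁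
    have e₂ := hf₂ hl₂
    have hg₂ := congrArg
      (fun t => HMap.comp t ((F.hmap μ).comp (𝓧.bond (h₂₂.trans hl₂)))) hg
    simp only [HMap.comp_assoc] at hg₂ e₁ e₂ ⊢
    rw [← e₂, hg₂, ← e₁]

/-- Composition of pro-morphisms (via choice of representatives). -/
def ProMor.comp (g : ProMor 𝓨 𝓩) (f : ProMor 𝓧 𝓨) : ProMor 𝓧 𝓩 :=
  ProMor.mk ((Quot.out g).comp (Quot.out f))

/-- The identity pro-morphism. -/
protected def ProMor.id (𝓧 : InverseSystem.{u}) : ProMor 𝓧 𝓧 :=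
  ProMor.mk (SysMor.identity 𝓧)

/-- `α` is an isomorphism of pro-HPol. -/
def ProMor.IsIso (α : ProMor 𝓧 𝓨) : Prop :=
  ∃ β : ProMor 𝓨 𝓧, β.comp α = ProMor.id 𝓧 ∧ α.comp β = ProMor.id 𝓨

/-! ### Restriction to a cofinal subset -/

/-- The subsystem of `𝓨` determined by a cofinal subset `S` of the index set. -/
def InverseSystem.restrict (𝓨 : InverseSystem.{u}) (S : Set 𝓨.Idx)
    (hcof : ∀ μ : 𝓨.Idx, ∃ μ' ∈ S, μ ≤ μ') : InverseSystem.{u} where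
  Idx := ↥S
  idxNonempty := by
    obtain ⟨μ⟩ := 𝓨.idxNonempty
    obtain ⟨μ', hs, -⟩ := hcof μ
    exact ⟨⟨μ', hs⟩⟩
  directed a b := by
    obtain ⟨c, hac, hbc⟩ := 𝓨.directed a b
    obtain ⟨c', hs, hcc'⟩ := hcof c
    exact ⟨⟨c', hs⟩, Subtype.coe_le_coe.mp (le_trans hac hcc'),
      Subtype.coe_le_coe.mp (le_trans hbc hcc')⟩
  obj i := 𝓨.obj i
  topObj i := 𝓨.topObj i
  inHPol i := 𝓨.inHPol i
  bond h := 𝓨.bond h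
  bond_refl i := 𝓨.bond_refl i
  bond_trans h₁ h₂ := 𝓨.bond_trans h₁ h₂

/-- The morphism induced by `F : 𝓧 → 𝓨` and the inclusion of a cofinal subset of
the index set of `𝓨`. -/
def SysMor.restrict (F : SysMor 𝓧 𝓨) (S : Set 𝓨.Idx)
    (hcof : ∀ μ : 𝓨.Idx, ∃ μ' ∈ S, μ ≤ μ') : SysMor 𝓧 (𝓨.restrict S hcof) where
  idxMap μ := F.idxMap μ.val
  hmap μ := F.hmap μ.val
  coherent := by
    intro μ μ' h
    exact F.coherent h

/-! ### Expansions and shape dimension -/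

/-- An `HPol`-expansion of the topological space `X`. -/
structure Expansion (X : Type u) [TopologicalSpace X] (𝓧 : InverseSystem.{u}) where
  /-- the projection H-maps `p_λ : X → X_λ` -/
  proj : ∀ l : 𝓧.Idx, HMap X (𝓧.obj l)
  proj_bond : ∀ {l l' : 𝓧.Idx} (h : l ≤ l'), (𝓧.bond h).comp (proj l') = proj l
  /-- every H-map into a space of `HPol` factors through some term of the system -/
  factors : ∀ (P : Type u) [TopologicalSpace P], InHPol P → ∀ f : HMap X P,
    ∃ (l : 𝓧.Idx) (g : HMap (𝓧.obj l) P), g.comp (proj l) = f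
  /-- the factorization is unique after passing to a larger index -/
  factors_unique : ∀ (P : Type u) [TopologicalSpace P], InHPol P →
    ∀ (l : 𝓧.Idx) (g g' : HMap (𝓧.obj l) P), g.comp (proj l) = g'.comp (proj l) →
      ∃ (l' : 𝓧.Idx) (h : l ≤ l'), g.comp (𝓧.bond h) = g'.comp (𝓧.bond h)

/-- The shape dimension of a topological space is `≤ n`: `X` admits an
`HPol`-expansion all of whose terms are homotopy dominated by polyhedra of
dimension `≤ n`. -/
def ShapeDimLE (X : Type u) [TopologicalSpace X] (n : ℕ) : Prop :=
  ∃ (𝓧 : InverseSystem.{u}) (_ : Expansion X 𝓧), 𝓧.DimLE n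

/-- The morphism of inverse systems `F` represents the H-map `f` with respect to the
expansions `pX` and `pY`, i.e. `q_μ ∘ f = f_μ ∘ p_{φ(μ)}` for all `μ`. -/
def Represents {X Y : Type u} [TopologicalSpace X] [TopologicalSpace Y]
    {𝓧 𝓨 : InverseSystem.{u}} (pX : Expansion X 𝓧) (pY : Expansion Y 𝓨)
    (f : HMap X Y) (F : SysMor 𝓧 𝓨) : Prop :=
  ∀ μ : 𝓨.Idx, (F.hmap μ).comp (pX.proj (F.idxMap μ)) = (pY.proj μ).comp f

/-- The shape dimension of an H-map `f : X → Y` is `≤ n`: the shape morphism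
induced by `f` admits a representation by a pro-morphism of dimension `≤ n`. -/
def HMapShapeDimLE {X Y : Type u} [TopologicalSpace X] [TopologicalSpace Y]
    (f : HMap X Y) (n : ℕ) : Prop :=
  ∃ (𝓧 𝓨 : InverseSystem.{u}) (pX : Expansion X 𝓧) (pY : Expansion Y 𝓨)
    (F : SysMor 𝓧 𝓨), Represents pX pY f F ∧ (ProMor.mk F).DimLE n

/-- The shape dimension of a space, as an extended natural number. -/
def shapeDim (X : Type u) [TopologicalSpace X] : ℕ∞ :=
  sInf {n : ℕ∞ | ∃ m : ℕ, n = (m : ℕ∞) ∧ ShapeDimLE X m}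

/-- The shape dimension of an H-map, as an extended natural number. -/
def hmapShapeDim {X Y : Type u} [TopologicalSpace X] [TopologicalSpace Y]
    (f : HMap X Y) : ℕ∞ :=
  sInf {n : ℕ∞ | ∃ m : ℕ, n = (m : ℕ∞) ∧ HMapShapeDimLE f m}

end ShapePaper

/-! `f' = β ∘ f ∘ α⁻¹` in pro-HPol, so it suffices that `dim ≤ n` is stable under composition
on either side. That holds already for representatives: a factorization `f_{μλ} = v ∘ u` through
an `n`-dimensional polyhedron stays one after composing with any H-map on either side, and by
coherence a term of a composite morphism of inverse systems is, at a large enough index, the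
composite of terms of the factors. -/

namespace ShapePaper

section HMap

variable {X Y Z : Type u} [TopologicalSpace X] [TopologicalSpace Y] [TopologicalSpace Z]
  {f : HMap X Y} {n : ℕ}

theorem HMap.FactorsThruPolyhedronDimLE.comp_left (hf : f.FactorsThruPolyhedronDimLE n)
    (g : HMap Y Z) : (g.comp f).FactorsThruPolyhedronDimLE n := by
  obtain ⟨P, _, hP, u, v, rfl⟩ := hf
  exact ⟨P, _, hP, u, g.comp v, (HMap.comp_assoc _ _ _).symm⟩

theorem HMap.FactorsThruPolyhedronDimLE.comp_right (hf : f.FactorsThruPolyhedronDimLE n)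
    (g : HMap Z X) : (f.comp g).FactorsThruPolyhedronDimLE n := by
  obtain ⟨P, _, hP, u, v, rfl⟩ := hf
  exact ⟨P, _, hP, u.comp g, v, HMap.comp_assoc _ _ _⟩

end HMap

namespace SysMor

variable {𝓦 𝓧 𝓨 𝓩 : InverseSystem.{u}}

theorem shift_refl (F : SysMor 𝓧 𝓨) (μ : 𝓨.Idx) : F.shift μ le_rfl = F.hmap μ := by
  rw [shift, 𝓧.bond_refl, HMap.comp_id]

theorem shift_eq_shift_of_le {F G : SysMor 𝓧 𝓨} {μ : 𝓨.Idx} {l l' : 𝓧.Idx}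
    {h₁ : F.idxMap μ ≤ l} {h₂ : G.idxMap μ ≤ l} (heq : F.shift μ h₁ = G.shift μ h₂)
    (hl : l ≤ l') (h₁' : F.idxMap μ ≤ l') (h₂' : G.idxMap μ ≤ l') :
    F.shift μ h₁' = G.shift μ h₂' := by
  rw [← shift_comp F μ h₁ hl, heq, shift_comp]

theorem comp_shift (G : SysMor 𝓨 𝓩) (F : SysMor 𝓧 𝓨) (ν : 𝓩.Idx) {l : 𝓧.Idx}
    (h : F.idxMap (G.idxMap ν) ≤ l) :
    (G.comp F).shift ν h = (G.hmap ν).comp (F.shift (G.idxMap ν) h) :=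
  HMap.comp_assoc _ _ _

theorem exists_comp_shift_eq (G : SysMor 𝓨 𝓩) (F : SysMor 𝓧 𝓨) (ν : 𝓩.Idx) {μ : 𝓨.Idx}
    (hμ : G.idxMap ν ≤ μ) :
    ∃ (l : 𝓧.Idx) (h₁ : F.idxMap (G.idxMap ν) ≤ l) (h₂ : F.idxMap μ ≤ l),
      ∀ {l' : 𝓧.Idx} (hl : l ≤ l'),
        (G.comp F).shift ν (h₁.trans hl) = (G.shift ν hμ).comp (F.shift μ (h₂.trans hl)) := by
  obtain ⟨l, h₁, h₂, hcoh⟩ := F.coherent' hμ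
  refine ⟨l, h₁, h₂, fun hl => ?_⟩
  calc (G.comp F).shift ν (h₁.trans hl)
      = (G.hmap ν).comp (F.shift (G.idxMap ν) (h₁.trans hl)) := comp_shift G F ν _
    _ = (G.hmap ν).comp ((𝓨.bond hμ).comp (F.shift μ (h₂.trans hl))) :=
        congrArg _ (hcoh hl).symm
    _ = (G.shift ν hμ).comp (F.shift μ (h₂.trans hl)) := (HMap.comp_assoc _ _ _).symm

theorem Equiv.refl (F : SysMor 𝓧 𝓨) : F.Equiv F :=
  fun μ => ⟨F.idxMap μ, le_rfl, le_rfl, rfl⟩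

theorem Equiv.symm {F G : SysMor 𝓧 𝓨} (h : F.Equiv G) : G.Equiv F := fun μ => by
  obtain ⟨l, h₁, h₂, e⟩ := h μ
  exact ⟨l, h₂, h₁, e.symm⟩

theorem Equiv.trans {F G H : SysMor 𝓧 𝓨} (h : F.Equiv G) (h' : G.Equiv H) :
    F.Equiv H := fun μ => by
  obtain ⟨l₁, h₁, h₂, e₁⟩ := h μ
  obtain ⟨l₂, h₃, h₄, e₂⟩ := h' μ
  obtain ⟨l, hl₁, hl₂⟩ := 𝓧.directed l₁ l₂
  exact ⟨l, h₁.trans hl₁, h₄.trans hl₂, (shift_eq_shift_of_le e₁ hl₁ _ (h₂.trans hl₁)).trans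
    (shift_eq_shift_of_le e₂ hl₂ _ _)⟩

theorem equivalence_equiv : Equivalence (@SysMor.Equiv 𝓧 𝓨) :=
  ⟨Equiv.refl, Equiv.symm, Equiv.trans⟩

theorem Equiv.comp {F₁ F₂ : SysMor 𝓧 𝓨} {G₁ G₂ : SysMor 𝓨 𝓩}
    (hF : F₁.Equiv F₂) (hG : G₁.Equiv G₂) : (G₁.comp F₁).Equiv (G₂.comp F₂) := fun ν => by
  obtain ⟨μ, hμ₁, hμ₂, eG⟩ := hG ν
  obtain ⟨l₁, a₁, _, e₁⟩ := G₁.exists_comp_shift_eq F₁ ν hμ₁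
  obtain ⟨l₂, a₂, _, e₂⟩ := G₂.exists_comp_shift_eq F₂ ν hμ₂
  obtain ⟨l₃, _, _, eF⟩ := hF μ
  obtain ⟨l₁₂, hl₁, hl₂⟩ := 𝓧.directed l₁ l₂
  obtain ⟨l, hl₁₂, hl₃⟩ := 𝓧.directed l₁₂ l₃
  refine ⟨l, a₁.trans (hl₁.trans hl₁₂), a₂.trans (hl₂.trans hl₁₂), ?_⟩
  rw [e₁ (hl₁.trans hl₁₂), e₂ (hl₂.trans hl₁₂), eG, shift_eq_shift_of_le eF hl₃]

theorem comp_assoc_equiv (H : SysMor 𝓩 𝓦) (G : SysMor 𝓨 𝓩) (F : SysMor 𝓧 𝓨) :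
    ((H.comp G).comp F).Equiv (H.comp (G.comp F)) := fun ν =>
  ⟨F.idxMap (G.idxMap (H.idxMap ν)), le_rfl, le_rfl, (shift_refl ((H.comp G).comp F) ν).trans
    ((HMap.comp_assoc _ _ _).trans (shift_refl (H.comp (G.comp F)) ν).symm)⟩

theorem comp_identity_equiv (F : SysMor 𝓧 𝓨) : (F.comp (SysMor.identity 𝓧)).Equiv F :=
  fun μ => ⟨F.idxMap μ, le_rfl, le_rfl, (shift_refl (F.comp (SysMor.identity 𝓧)) μ).trans
    ((HMap.comp_id _).trans (shift_refl F μ).symm)⟩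

variable {n : ℕ}

theorem DimLE.comp_left {F : SysMor 𝓧 𝓨} (hF : F.DimLE n) (G : SysMor 𝓨 𝓩) :
    (G.comp F).DimLE n := fun ν => by
  obtain ⟨l, h, hfac⟩ := hF (G.idxMap ν)
  exact ⟨l, h, (congrArg (·.FactorsThruPolyhedronDimLE n) (comp_shift G F ν h)).mpr
    (hfac.comp_left _)⟩

theorem DimLE.comp_right {F : SysMor 𝓧 𝓨} (hF : F.DimLE n) (A : SysMor 𝓦 𝓧) :
    (F.comp A).DimLE n := fun μ => by
  obtain ⟨l, hl, hfac⟩ := hF μ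
  obtain ⟨m, h₁, _, e⟩ := F.exists_comp_shift_eq A μ hl
  exact ⟨m, h₁, (congrArg (·.FactorsThruPolyhedronDimLE n) (e le_rfl)).mpr (hfac.comp_right _)⟩

end SysMor

namespace ProMor

variable {𝓦 𝓧 𝓨 𝓩 : InverseSystem.{u}}

theorem mk_surjective : Function.Surjective (ProMor.mk : SysMor 𝓧 𝓨 → ProMor 𝓧 𝓨) :=
  fun f => ⟨Quot.out f, Quot.out_eq f⟩

theorem equiv_of_mk_eq_mk {F G : SysMor 𝓧 𝓨} (h : ProMor.mk F = ProMor.mk G) : F.Equiv G :=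
  SysMor.equivalence_equiv.eqvGen_iff.mp (Quot.eqvGen_exact h)

theorem mk_comp_mk (G : SysMor 𝓨 𝓩) (F : SysMor 𝓧 𝓨) :
    (ProMor.mk G).comp (ProMor.mk F) = ProMor.mk (G.comp F) :=
  Quot.sound (SysMor.Equiv.comp (equiv_of_mk_eq_mk (Quot.out_eq _))
    (equiv_of_mk_eq_mk (Quot.out_eq _)))

theorem comp_assoc (h : ProMor 𝓩 𝓦) (g : ProMor 𝓨 𝓩) (f : ProMor 𝓧 𝓨) :
    (h.comp g).comp f = h.comp (g.comp f) := by
  obtain ⟨H, rfl⟩ := mk_surjective h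
  obtain ⟨G, rfl⟩ := mk_surjective g
  obtain ⟨F, rfl⟩ := mk_surjective f
  simp only [mk_comp_mk]
  exact Quot.sound (SysMor.comp_assoc_equiv H G F)

theorem comp_id (f : ProMor 𝓧 𝓨) : f.comp (ProMor.id 𝓧) = f := by
  obtain ⟨F, rfl⟩ := mk_surjective f
  rw [ProMor.id, mk_comp_mk]
  exact Quot.sound (SysMor.comp_identity_equiv F)

variable {n : ℕ}

theorem DimLE.comp_left {f : ProMor 𝓧 𝓨} (hf : f.DimLE n) (g : ProMor 𝓨 𝓩) :
    (g.comp f).DimLE n := by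
  obtain ⟨F, rfl, hF⟩ := hf
  obtain ⟨G, rfl⟩ := mk_surjective g
  exact ⟨G.comp F, (mk_comp_mk G F).symm, hF.comp_left G⟩

theorem DimLE.comp_right {f : ProMor 𝓧 𝓨} (hf : f.DimLE n) (a : ProMor 𝓦 𝓧) :
    (f.comp a).DimLE n := by
  obtain ⟨F, rfl, hF⟩ := hf
  obtain ⟨A, rfl⟩ := mk_surjective a
  exact ⟨F.comp A, (mk_comp_mk F A).symm, hF.comp_right A⟩

end ProMor

theorem proMor_dimLE_of_commSq_general (𝓧 𝓨 𝓧' 𝓨' : InverseSystem.{u})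
    (f : ProMor 𝓧 𝓨) (f' : ProMor 𝓧' 𝓨') (α : ProMor 𝓧 𝓧') (β : ProMor 𝓨 𝓨')
    (hα : α.IsIso) (hcomm : β.comp f = f'.comp α)
    (n : ℕ) (hf : f.DimLE n) : f'.DimLE n := by
  obtain ⟨αinv, -, hα_inv⟩ := hα
  have hf' : f' = β.comp (f.comp αinv) := by
    rw [← ProMor.comp_assoc, hcomm, ProMor.comp_assoc, hα_inv, ProMor.comp_id]
  exact hf' ▸ (hf.comp_right αinv).comp_left β

/-- **Proposition 2.10.** Suppose a commutative diagram `β ∘ f = f' ∘ α` is given in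
pro-HPol, with `α : 𝐗 → 𝐗'` and `β : 𝐘 → 𝐘'` isomorphisms. If `dim f ≤ n`,
then `dim f' ≤ n`. -/
theorem proMor_dimLE_of_commSq (𝓧 𝓨 𝓧' 𝓨' : InverseSystem.{u})
    (f : ProMor 𝓧 𝓨) (f' : ProMor 𝓧' 𝓨') (α : ProMor 𝓧 𝓧') (β : ProMor 𝓨 𝓨')
    (hα : α.IsIso) (hβ : β.IsIso) (hcomm : β.comp f = f'.comp α)
    (n : ℕ) (hf : f.DimLE n) : f'.DimLE n :=
  proMor_dimLE_of_commSq_general 𝓧 𝓨 𝓧' 𝓨' f f' α β hα hcomm n hf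

end ShapePaper
end
end

section
/- Let F : X → Y be a shape morphism of topological spaces. If sd X ≤ n or sd Y ≤ n, then sd F ≤ n. -/
universe u

noncomputable section

namespace ShapePaper

/-! If `sd X ≤ n`, every H-map from `X` to an object of `HPol` factors through an
`n`-dimensional polyhedron `P`, namely through a term of an `n`-dimensional expansion and a
polyhedron dominating it. Since `P` is itself in `HPol`, such a factorization of
`f ∘ p_i : X → Q` descends to one of `f ∘ p_{il}` for some large `l`; for `f = f_μ` this is
the case `sd X ≤ n`. If `sd Y ≤ n`, taking for `f` the identity of `Y_μ` shows that the bonding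
map `q_{μμ'}` factors through an `n`-dimensional polyhedron for large `μ'`, and the coherence
of `F` writes `f_{μλ}` as `q_{μμ'} ∘ f_{μ'λ}`. -/

section

variable {X : Type u} [TopologicalSpace X] {𝓧 : InverseSystem.{u}} {n : ℕ}

theorem IsPolyhedronDimLE.inHPol {P : Type u} [TopologicalSpace P]
    (hP : IsPolyhedronDimLE P n) : InHPol P :=
  let ⟨R, _⟩ := hP
  ⟨P, ‹_›, ⟨R⟩, ⟨ContinuousMap.HomotopyEquiv.refl P⟩⟩

theorem HMap.FactorsThruPolyhedronDimLE.comp {Y Z : Type u} [TopologicalSpace Y]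
    [TopologicalSpace Z] {g : HMap Y Z} (hg : g.FactorsThruPolyhedronDimLE n)
    (f : HMap X Y) : (g.comp f).FactorsThruPolyhedronDimLE n :=
  let ⟨P, _, hP, u, v, hvu⟩ := hg
  ⟨P, ‹_›, hP, u.comp f, v, by rw [hvu, HMap.comp_assoc]⟩

theorem DominatedByPolyhedronDimLE.comp_factorsThru {Y Z W : Type u} [TopologicalSpace Y]
    [TopologicalSpace Z] [TopologicalSpace W] (hY : DominatedByPolyhedronDimLE Y n)
    (g : HMap Y Z) (f : HMap W Y) : (g.comp f).FactorsThruPolyhedronDimLE n :=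
  let ⟨P, _, hP, s, d, hds⟩ := hY
  ⟨P, ‹_›, hP, s.comp f, g.comp d, by
    rw [HMap.comp_assoc, ← HMap.comp_assoc d, hds, HMap.id_comp]⟩

namespace Expansion

variable (p : Expansion X 𝓧)

theorem comp_bond_comp_proj {i l : 𝓧.Idx} {Q : Type u} [TopologicalSpace Q]
    (g : HMap (𝓧.obj i) Q) (h : i ≤ l) :
    (g.comp (𝓧.bond h)).comp (p.proj l) = g.comp (p.proj i) := by
  rw [HMap.comp_assoc, p.proj_bond]

theorem exists_comp_bond_eq {Q : Type u} [TopologicalSpace Q] (hQ : InHPol Q) {i j : 𝓧.Idx}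
    (g : HMap (𝓧.obj i) Q) (g' : HMap (𝓧.obj j) Q)
    (hgg' : g.comp (p.proj i) = g'.comp (p.proj j)) :
    ∃ (l : 𝓧.Idx) (hi : i ≤ l) (hj : j ≤ l), g.comp (𝓧.bond hi) = g'.comp (𝓧.bond hj) := by
  obtain ⟨k, hik, hjk⟩ := 𝓧.directed i j
  obtain ⟨l, hkl, heq⟩ := p.factors_unique Q hQ k (g.comp (𝓧.bond hik)) (g'.comp (𝓧.bond hjk))
    (by rw [p.comp_bond_comp_proj, p.comp_bond_comp_proj, hgg'])
  refine ⟨l, hik.trans hkl, hjk.trans hkl, ?_⟩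
  simpa only [HMap.comp_assoc, 𝓧.bond_trans] using heq

theorem exists_comp_bond_eq_comp_of_comp_proj_eq {P Q : Type u} [TopologicalSpace P]
    [TopologicalSpace Q] (hP : InHPol P) (hQ : InHPol Q) {i : 𝓧.Idx} (f : HMap (𝓧.obj i) Q)
    (w : HMap X P) (v : HMap P Q) (hf : f.comp (p.proj i) = v.comp w) :
    ∃ (l : 𝓧.Idx) (h : i ≤ l) (u : HMap (𝓧.obj l) P), f.comp (𝓧.bond h) = v.comp u := by
  obtain ⟨j, w', hw'⟩ := p.factors P hP w
  obtain ⟨l, hi, hj, heq⟩ := p.exists_comp_bond_eq hQ f (v.comp w')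
    (by rw [hf, ← hw', HMap.comp_assoc])
  exact ⟨l, hi, w'.comp (𝓧.bond hj), by rw [heq, HMap.comp_assoc]⟩

end Expansion

theorem ShapeDimLE.factorsThruPolyhedronDimLE (hX : ShapeDimLE X n) {Q : Type u}
    [TopologicalSpace Q] (hQ : InHPol Q) (φ : HMap X Q) : φ.FactorsThruPolyhedronDimLE n := by
  obtain ⟨𝓧', p', hdim⟩ := hX
  obtain ⟨j, g, rfl⟩ := p'.factors Q hQ φ
  exact (hdim j).comp_factorsThru g (p'.proj j)

theorem Expansion.exists_comp_bond_factorsThru (p : Expansion X 𝓧) (hX : ShapeDimLE X n)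
    {Q : Type u} [TopologicalSpace Q] (hQ : InHPol Q) {i : 𝓧.Idx} (f : HMap (𝓧.obj i) Q) :
    ∃ (l : 𝓧.Idx) (h : i ≤ l), (f.comp (𝓧.bond h)).FactorsThruPolyhedronDimLE n := by
  obtain ⟨P, _, hP, w, v, hvw⟩ := hX.factorsThruPolyhedronDimLE hQ (f.comp (p.proj i))
  obtain ⟨l, h, u, hu⟩ := p.exists_comp_bond_eq_comp_of_comp_proj_eq hP.inHPol hQ f w v hvw
  exact ⟨l, h, P, ‹_›, hP, u, v, hu⟩

theorem Expansion.exists_bond_factorsThru (p : Expansion X 𝓧) (hX : ShapeDimLE X n)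
    (i : 𝓧.Idx) : ∃ (l : 𝓧.Idx) (h : i ≤ l), (𝓧.bond h).FactorsThruPolyhedronDimLE n := by
  simpa only [HMap.id_comp] using p.exists_comp_bond_factorsThru hX (𝓧.inHPol i) (HMap.id _)

end

/-- **Theorem 2.16.** Let `F : X → Y` be a shape morphism of topological spaces (given,
with respect to HPol-expansions of `X` and `Y`, by a morphism of inverse systems `F`).
If `sd X ≤ n` or `sd Y ≤ n` then `sd F ≤ n`. -/
theorem shapeMor_sdLE_of_space (X Y : Type u) [TopologicalSpace X] [TopologicalSpace Y]
    (𝓧 𝓨 : InverseSystem.{u}) (pX : Expansion X 𝓧) (pY : Expansion Y 𝓨)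
    (F : SysMor 𝓧 𝓨) (n : ℕ) (h : ShapeDimLE X n ∨ ShapeDimLE Y n) :
    (ProMor.mk F).DimLE n := by
  refine ⟨F, rfl, fun μ => ?_⟩
  rcases h with hX | hY
  · exact pX.exists_comp_bond_factorsThru hX (𝓨.inHPol μ) (F.hmap μ)
  · obtain ⟨μ', hμ, hbond⟩ := pY.exists_bond_factorsThru hY μ
    obtain ⟨l, h₁, h₂, hcoh⟩ := F.coherent hμ
    refine ⟨l, h₁, ?_⟩
    rw [SysMor.shift, ← hcoh]
    exact hbond.comp _

end ShapePaper
end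
end
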